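/- Value function difference via occupancy: for stationary policies π, π' on a finite discounted MDP, (1-γ)(J_μ^{π'} − J_μ^{π}) = ∑_s d_μ^{π'}(s) ∑_a π'(a|s) A^π(s,a), and by symmetry also equals −∑_s d_μ^{π}(s) ∑_a π(a|s) A^{π'}(s,a). -/

import Mathlib

/-- State distribution at time t under transition kernel `Ppi` from initial distribution `μ`. -/
noncomputable def stateDist {S : Type*} [Fintype S]
    (Ppi : S → S → ℝ) (μ : S → ℝ) : ℕ → S → ℝ
  | 0 => μ
  | t + 1 => fun s' => ∑ s, stateDist Ppi μ t s * Ppi s s'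

/-- γ-discounted (1-γ)-normalized state occupancy measure. -/
noncomputable def occupancy {S : Type*} [Fintype S]
    (Ppi : S → S → ℝ) (μ : S → ℝ) (γ : ℝ) (s : S) : ℝ :=
  (1 - γ) * ∑' t : ℕ, γ ^ t * stateDist Ppi μ t s

/-- Transition kernel over states induced by policy π. -/
noncomputable def inducedKernel {S A : Type*} [Fintype A]
    (P : S → A → S → ℝ) (π : S → A → ℝ) : S → S → ℝ :=
  fun s s' => ∑ a, π s a * P s a s'

/-! The occupancy measure satisfies the flow equation `d = (1 - γ) μ + γ d K`, so for every `h`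
the residual `h - γ K h` has `d`-average `(1 - γ) μ h`. By the Bellman equation of `V'`, the
`π'`-average of the advantage of `π` is exactly such a residual, for `h = V' - V`; exchanging the
roles of the two policies gives the second identity. -/

open Finset

section StateDist

variable {S : Type*} [Fintype S]

lemma sum_abs_stateDist_le {K : S → S → ℝ} (hK0 : ∀ s s', 0 ≤ K s s')
    (hK1 : ∀ s, ∑ s', K s s' = 1) (μ : S → ℝ) (t : ℕ) :
    ∑ s, |stateDist K μ t s| ≤ ∑ s, |μ s| := by
  induction t with
  | zero => rfl
  | succ t ih =>
    calc ∑ s', |∑ s, stateDist K μ t s * K s s'|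
        ≤ ∑ s', ∑ s, |stateDist K μ t s| * K s s' := by
          gcongr with s'
          refine (abs_sum_le_sum_abs _ _).trans_eq (sum_congr rfl fun s _ => ?_)
          rw [abs_mul, abs_of_nonneg (hK0 s s')]
      _ = ∑ s, |stateDist K μ t s| := by
          rw [sum_comm]
          simp only [← mul_sum, hK1, mul_one]
      _ ≤ ∑ s, |μ s| := ih

lemma summable_discounted_stateDist {K : S → S → ℝ} (hK0 : ∀ s s', 0 ≤ K s s')
    (hK1 : ∀ s, ∑ s', K s s' = 1) (μ : S → ℝ) {γ : ℝ} (hγ0 : 0 ≤ γ) (hγ1 : γ < 1) (s : S) :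
    Summable fun t => γ ^ t * stateDist K μ t s := by
  refine .of_norm_bounded ((summable_geometric_of_lt_one hγ0 hγ1).mul_left (∑ s, |μ s|))
    fun t => ?_
  rw [Real.norm_eq_abs, abs_mul, abs_of_nonneg (pow_nonneg hγ0 t), mul_comm]
  gcongr
  exact (single_le_sum (fun s _ => abs_nonneg _) (mem_univ s)).trans
    (sum_abs_stateDist_le hK0 hK1 μ t)

variable {K : S → S → ℝ} {μ : S → ℝ} {γ : ℝ}

lemma occupancy_eq (hsum : ∀ s, Summable fun t => γ ^ t * stateDist K μ t s) (s' : S) :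
    occupancy K μ γ s' = (1 - γ) * μ s' + γ * ∑ s, occupancy K μ γ s * K s s' := by
  have hshift : ∑' t, γ ^ (t + 1) * stateDist K μ (t + 1) s'
      = γ * ∑ s, (∑' t, γ ^ t * stateDist K μ t s) * K s s' := by
    calc ∑' t, γ ^ (t + 1) * stateDist K μ (t + 1) s'
        = ∑' t, ∑ s, γ * (γ ^ t * stateDist K μ t s * K s s') := by
          refine tsum_congr fun t => ?_
          simp only [stateDist, mul_sum, pow_succ]
          exact sum_congr rfl fun s _ => by ring
      _ = γ * ∑ s, (∑' t, γ ^ t * stateDist K μ t s) * K s s' := by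
          rw [Summable.tsum_finsetSum fun s _ => ((hsum s).mul_right _).mul_left γ, mul_sum]
          simp only [tsum_mul_left, tsum_mul_right]
  rw [occupancy, (hsum s').tsum_eq_zero_add, hshift]
  simp only [occupancy, stateDist, pow_zero, one_mul, mul_add, mul_sum]
  exact congrArg _ (sum_congr rfl fun s _ => by ring)

lemma sum_occupancy_mul_sub_discounted
    (hsum : ∀ s, Summable fun t => γ ^ t * stateDist K μ t s) (h : S → ℝ) :
    ∑ s, occupancy K μ γ s * (h s - γ * ∑ s', K s s' * h s') = (1 - γ) * ∑ s, μ s * h s := by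
  calc ∑ s, occupancy K μ γ s * (h s - γ * ∑ s', K s s' * h s')
      = ∑ s', (occupancy K μ γ s' - γ * ∑ s, occupancy K μ γ s * K s s') * h s' := by
        simp only [mul_sub, sub_mul, sum_sub_distrib, mul_sum, sum_mul]
        rw [sum_comm (γ := S)]
        congr 1
        exact sum_congr rfl fun s' _ => sum_congr rfl fun s _ => by ring
    _ = (1 - γ) * ∑ s, μ s * h s := by
        rw [mul_sum]
        exact sum_congr rfl fun s' _ => by rw [occupancy_eq hsum s']; ring

end StateDist

section Policy

variable {S A : Type*} [Fintype A] {P : S → A → S → ℝ} {ρ : S → A → ℝ}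

lemma inducedKernel_nonneg (hP0 : ∀ s a s', 0 ≤ P s a s') (hρ0 : ∀ s a, 0 ≤ ρ s a)
    (s s' : S) : 0 ≤ inducedKernel P ρ s s' :=
  sum_nonneg fun a _ => mul_nonneg (hρ0 s a) (hP0 s a s')

variable [Fintype S]

lemma sum_inducedKernel (hP1 : ∀ s a, ∑ s', P s a s' = 1) (hρ1 : ∀ s, ∑ a, ρ s a = 1)
    (s : S) : ∑ s', inducedKernel P ρ s s' = 1 := by
  simp only [inducedKernel]
  rw [sum_comm]
  simp only [← mul_sum, hP1, mul_one, hρ1]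

lemma sum_inducedKernel_mul (s : S) (W : S → ℝ) :
    ∑ s', inducedKernel P ρ s s' * W s' = ∑ a, ρ s a * ∑ s', P s a s' * W s' := by
  simp only [inducedKernel, sum_mul, mul_sum]
  rw [sum_comm]
  exact sum_congr rfl fun a _ => sum_congr rfl fun s' _ => by ring

theorem performance_difference {R : S → A → ℝ} {γ : ℝ} (hγ0 : 0 ≤ γ) (hγ1 : γ < 1)
    (hP0 : ∀ s a s', 0 ≤ P s a s') (hP1 : ∀ s a, ∑ s', P s a s' = 1)
    (hρ0 : ∀ s a, 0 ≤ ρ s a) (hρ1 : ∀ s, ∑ a, ρ s a = 1) (μ : S → ℝ) {W W' : S → ℝ}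
    (hW' : ∀ s, W' s = ∑ a, ρ s a * (R s a + γ * ∑ s', P s a s' * W' s')) :
    (1 - γ) * ((∑ s, μ s * W' s) - ∑ s, μ s * W s) =
      ∑ s, occupancy (inducedKernel P ρ) μ γ s *
        ∑ a, ρ s a * (R s a + γ * ∑ s', P s a s' * W s' - W s) := by
  have hresidual : ∀ s, ∑ a, ρ s a * (R s a + γ * ∑ s', P s a s' * W s' - W s)
      = (W' s - W s) - γ * ∑ s', inducedKernel P ρ s s' * (W' s' - W s') := by
    intro s
    rw [hW' s]
    simp only [mul_sub, mul_add, sum_sub_distrib, sum_add_distrib, ← sum_mul, hρ1, one_mul,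
      mul_left_comm _ γ, ← mul_sum, sum_inducedKernel_mul]
    ring
  simp_rw [hresidual]
  rw [sum_occupancy_mul_sub_discounted (summable_discounted_stateDist
    (inducedKernel_nonneg hP0 hρ0) (sum_inducedKernel hP1 hρ1) μ hγ0 hγ1)]
  simp only [mul_sub, sum_sub_distrib]

end Policy

theorem value_difference_via_occupancy_general
    {S A : Type*} [Fintype S] [Fintype A]
    (P : S → A → S → ℝ) (R : S → A → ℝ) (γ : ℝ)
    (hγ0 : 0 ≤ γ) (hγ1 : γ < 1)
    (hP0 : ∀ s a s', 0 ≤ P s a s') (hP1 : ∀ s a, ∑ s', P s a s' = 1)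
    (π π' : S → A → ℝ)
    (hπ0 : ∀ s a, 0 ≤ π s a) (hπ1 : ∀ s, ∑ a, π s a = 1)
    (hπ'0 : ∀ s a, 0 ≤ π' s a) (hπ'1 : ∀ s, ∑ a, π' s a = 1)
    (μ : S → ℝ)
    (V V' : S → ℝ)
    (hV : ∀ s, V s = ∑ a, π s a * (R s a + γ * ∑ s', P s a s' * V s'))
    (hV' : ∀ s, V' s = ∑ a, π' s a * (R s a + γ * ∑ s', P s a s' * V' s'))
    (Q Q' : S → A → ℝ)
    (hQ : ∀ s a, Q s a = R s a + γ * ∑ s', P s a s' * V s')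
    (hQ' : ∀ s a, Q' s a = R s a + γ * ∑ s', P s a s' * V' s')
    (Adv Adv' : S → A → ℝ)
    (hAdv : ∀ s a, Adv s a = Q s a - V s)
    (hAdv' : ∀ s a, Adv' s a = Q' s a - V' s) :
    (1 - γ) * ((∑ s, μ s * V' s) - ∑ s, μ s * V s) =
        ∑ s, occupancy (inducedKernel P π') μ γ s * ∑ a, π' s a * Adv s a ∧
    (1 - γ) * ((∑ s, μ s * V' s) - ∑ s, μ s * V s) =
        -∑ s, occupancy (inducedKernel P π) μ γ s * ∑ a, π s a * Adv' s a := by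
  constructor
  · rw [performance_difference hγ0 hγ1 hP0 hP1 hπ'0 hπ'1 μ hV']
    simp only [hAdv, hQ]
  · have hswap := performance_difference hγ0 hγ1 hP0 hP1 hπ0 hπ1 μ (W := V') hV
    simp only [hAdv', hQ', ← hswap]
    ring

/-- (1-γ)(J_μ^{π'} − J_μ^{π}) = ∑_s d_μ^{π'}(s) ∑_a π'(a|s) A^π(s,a)
and also equals −∑_s d_μ^{π}(s) ∑_a π(a|s) A^{π'}(s,a). -/
theorem value_difference_via_occupancy
    {S A : Type*} [Fintype S] [Fintype A]
    (P : S → A → S → ℝ) (R : S → A → ℝ) (γ : ℝ)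
    (hγ0 : 0 ≤ γ) (hγ1 : γ < 1)
    (hP0 : ∀ s a s', 0 ≤ P s a s') (hP1 : ∀ s a, ∑ s', P s a s' = 1)
    (π π' : S → A → ℝ)
    (hπ0 : ∀ s a, 0 ≤ π s a) (hπ1 : ∀ s, ∑ a, π s a = 1)
    (hπ'0 : ∀ s a, 0 ≤ π' s a) (hπ'1 : ∀ s, ∑ a, π' s a = 1)
    (μ : S → ℝ) (hμ0 : ∀ s, 0 ≤ μ s) (hμ1 : ∑ s, μ s = 1)
    (V V' : S → ℝ)
    (hV : ∀ s, V s = ∑ a, π s a * (R s a + γ * ∑ s', P s a s' * V s'))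
    (hV' : ∀ s, V' s = ∑ a, π' s a * (R s a + γ * ∑ s', P s a s' * V' s'))
    (Q Q' : S → A → ℝ)
    (hQ : ∀ s a, Q s a = R s a + γ * ∑ s', P s a s' * V s')
    (hQ' : ∀ s a, Q' s a = R s a + γ * ∑ s', P s a s' * V' s')
    (Adv Adv' : S → A → ℝ)
    (hAdv : ∀ s a, Adv s a = Q s a - V s)
    (hAdv' : ∀ s a, Adv' s a = Q' s a - V' s) :
    (1 - γ) * ((∑ s, μ s * V' s) - ∑ s, μ s * V s) =
        ∑ s, occupancy (inducedKernel P π') μ γ s * ∑ a, π' s a * Adv s a ∧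
    (1 - γ) * ((∑ s, μ s * V' s) - ∑ s, μ s * V s) =
        -∑ s, occupancy (inducedKernel P π) μ γ s * ∑ a, π s a * Adv' s a :=
  value_difference_via_occupancy_general P R γ hγ0 hγ1 hP0 hP1 π π' hπ0 hπ1 hπ'0 hπ'1 μ V V' hV hV'
    Q Q' hQ hQ' Adv Adv' hAdv hAdv'
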